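/- Let Ω be a TC-space and let κ, τ be stopping times with κ ≤ τ pointwise. For ω ∈ Ω define τ'_ω(ω') = τ(ω ∗_κ ω') − κ(ω) if κ(ω) < ∞ and ω' ∈ 𝒞_{ω,κ(ω)}, and τ'_ω(ω') = +∞ otherwise. Then the map (ω, ω') ↦ τ'_ω(ω') is jointly measurable; for every fixed ω ∈ Ω the map τ'_ω is a stopping time; and τ(ω ∗_κ ω') = κ(ω) + τ'_ω(ω') whenever κ(ω) < ∞ and ω' ∈ 𝒞_{ω,κ(ω)}. -/

import Mathlib

open MeasureTheory Set NNReal ENNReal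

/-- A T-space (truncated space): a filtered measurable space `(Ω, 𝓕, (𝓕ₜ)_{t ∈ [0,∞)})`
with `𝓕 = ⋁ₜ 𝓕ₜ`, equipped with a truncation family `(Tₜ)` such that `(t, ω) ↦ Tₜ ω` is
jointly measurable, `Tₜ ∘ Tₛ = T_{s ∧ t}` and `𝓕ₜ = σ(Tₜ)`. -/
structure TSpace (Ω : Type*) [mΩ : MeasurableSpace Ω] where
  filt : ℝ≥0 → MeasurableSpace Ω
  T : ℝ≥0 → Ω → Ω
  iSup_filt : (⨆ t : ℝ≥0, filt t) = mΩ
  meas_T : Measurable fun p : ℝ≥0 × Ω => T p.1 p.2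
  T_comp : ∀ (s t : ℝ≥0) (ω : Ω), T t (T s ω) = T (min s t) ω
  filt_eq : ∀ t : ℝ≥0, filt t = MeasurableSpace.comap (T t) mΩ

namespace TSpace

variable {Ω : Type*} [mΩ : MeasurableSpace Ω]

/-- Truncation indexed by extended times, with the convention `T_∞ = id`. -/
noncomputable def Te (X : TSpace Ω) (t : ℝ≥0∞) (ω : Ω) : Ω :=
  if t = ∞ then ω else X.T t.toNNReal ω

/-- A (raw) stopping time on a T-space: `{τ ≤ t} ∈ 𝓕ₜ` for all `t ∈ [0,∞)`. -/
def IsStoppingTime (X : TSpace Ω) (τ : Ω → ℝ≥0∞) : Prop :=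
  ∀ t : ℝ≥0, MeasurableSet[X.filt t] {ω | τ ω ≤ t}

/-- Truncation at a stopping time: `T_τ(ω) = T_{τ(ω)}(ω)`. -/
noncomputable def Tstop (X : TSpace Ω) (τ : Ω → ℝ≥0∞) (ω : Ω) : Ω :=
  X.Te (τ ω) ω

end TSpace

open MeasureTheory Set NNReal ENNReal

/-- The positive part of an extended-real number, as an element of `ℝ≥0∞`. -/
noncomputable def EReal.posPart (x : EReal) : ℝ≥0∞ :=
  if x = ⊤ then ⊤ else ENNReal.ofReal x.toReal

/-- The (possibly `-∞`-valued) integral `∫ G dμ = ∫ G⁺ dμ − ∫ G⁻ dμ` of an extended-real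
function, meaningful whenever `∫ G⁺ dμ < ∞`. -/
noncomputable def eIntegral {Ω : Type*} [MeasurableSpace Ω] (μ : Measure Ω)
    (G : Ω → EReal) : EReal :=
  ((∫⁻ ω, (G ω).posPart ∂μ : ℝ≥0∞) : EReal) - ((∫⁻ ω, (-(G ω)).posPart ∂μ : ℝ≥0∞) : EReal)

/-- A map is universally measurable if it is `μ`-null measurable (i.e. measurable for the
`μ`-completed σ-algebra) for every Borel probability measure `μ`. -/
def UnivMeasurable {α β : Type*} [MeasurableSpace α] [MeasurableSpace β] (f : α → β) : Prop :=
  ∀ μ : Measure α, IsProbabilityMeasure μ → NullMeasurable f μ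

/-- A (universally measurable) kernel from `α` to `Ω`: a family of Borel probability measures
`ν x` such that `x ↦ ν x B` is universally measurable for every Borel set `B`. -/
def IsUKernel {α Ω : Type*} [MeasurableSpace α] [MeasurableSpace Ω]
    (ν : α → ProbabilityMeasure Ω) : Prop :=
  ∀ B : Set Ω, MeasurableSet B → UnivMeasurable fun x => (ν x : Measure Ω) B

/-- A TC-space (truncation–concatenation space): a T-space together with a measurable
compatibility set `𝒞 ⊆ Ω × [0,∞) × Ω` and a concatenation operator `∗ : 𝒞 → Ω`
(extended arbitrarily off `𝒞`, measurable on `𝒞`) satisfying the compatibility and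
truncation axioms of Definition of TC-spaces. -/
structure TCSpace (Ω : Type*) [mΩ : MeasurableSpace Ω] extends TSpace Ω where
  Comp : Set (Ω × ℝ≥0 × Ω)
  meas_Comp : MeasurableSet Comp
  conc : Ω → ℝ≥0 → Ω → Ω
  meas_conc : Measurable fun p : Comp => conc (p : Ω × ℝ≥0 × Ω).1 (p : Ω × ℝ≥0 × Ω).2.1
      (p : Ω × ℝ≥0 × Ω).2.2
  comp_left : ∀ (ω : Ω) (t : ℝ≥0) (ω' : Ω), ((ω, t, ω') ∈ Comp ↔ (T t ω, t, ω') ∈ Comp)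
  comp_right : ∀ (ω : Ω) (t : ℝ≥0) (ω' : Ω) (s : ℝ≥0),
      ((ω, t, ω') ∈ Comp ↔ (ω, t, T s ω') ∈ Comp)
  conc_left : ∀ (ω : Ω) (t : ℝ≥0) (ω' : Ω), (ω, t, ω') ∈ Comp →
      conc ω t ω' = conc (T t ω) t ω'
  trunc_conc_le : ∀ (ω : Ω) (t : ℝ≥0) (ω' : Ω) (s : ℝ≥0), (ω, t, ω') ∈ Comp → s ≤ t →
      T s (conc ω t ω') = T s ω
  trunc_conc_gt : ∀ (ω : Ω) (t : ℝ≥0) (ω' : Ω) (s : ℝ≥0), (ω, t, ω') ∈ Comp → t < s →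
      T s (conc ω t ω') = conc ω t (T (s - t) ω')

namespace TCSpace

variable {Ω : Type*} [mΩ : MeasurableSpace Ω]

/-- Concatenation at an extended time, with the convention `ω ∗_∞ ω' = ω`. -/
noncomputable def concE (X : TCSpace Ω) (ω : Ω) (t : ℝ≥0∞) (ω' : Ω) : Ω :=
  if t = ∞ then ω else X.conc ω t.toNNReal ω'

/-- Extended compatibility: any two elements are compatible at `t = ∞`. -/
def CompE (X : TCSpace Ω) (ω : Ω) (t : ℝ≥0∞) (ω' : Ω) : Prop :=
  t = ∞ ∨ (ω, t.toNNReal, ω') ∈ X.Comp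

/-- A probability measure `μ` and a kernel `ν` are compatible at a stopping time `τ`:
`ν^{≤τ}_ω(𝒞_{ω,τ(ω)}) = 1` for `μ`-almost every `ω`. -/
def MeasCompatible (X : TCSpace Ω) (μ : Measure Ω) (ν : Ω → ProbabilityMeasure Ω)
    (τ : Ω → ℝ≥0∞) : Prop :=
  ∀ᵐ ω ∂μ, (ν (X.toTSpace.Tstop τ ω) : Measure Ω) {ω' | X.CompE ω (τ ω) ω'} = 1

/-- The concatenation `μ ∗_τ ν` of a measure and a kernel at a stopping time `τ`: the
pushforward of `μ(dω) ν^{≤τ}_ω(dω')` under `(ω, ω') ↦ ω ∗_{τ(ω)} ω'`. -/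
noncomputable def concMeasure (X : TCSpace Ω) (μ : Measure Ω)
    (ν : Ω → ProbabilityMeasure Ω) (τ : Ω → ℝ≥0∞) : Measure Ω :=
  μ.bind fun ω => Measure.map (fun ω' => X.concE ω (τ ω) ω') (ν (X.toTSpace.Tstop τ ω))

/-- A tail map: `G(ω ∗_t ω') = G(ω')` for all finite `t` and compatible pairs. -/
def IsTail (X : TCSpace Ω) (G : Ω → EReal) : Prop :=
  ∀ (t : ℝ≥0) (ω ω' : Ω), (ω, t, ω') ∈ X.Comp → G (X.conc ω t ω') = G ω'

end TCSpace

/-- A universally measurable selector of a control correspondence `P`. -/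
def IsSelector {Ω : Type*} [MeasurableSpace Ω] (P : Ω → Set (ProbabilityMeasure Ω))
    (ν : Ω → ProbabilityMeasure Ω) : Prop :=
  IsUKernel ν ∧ ∀ ω, ν ω ∈ P ω

/-- A control correspondence on a TC-space is concatenable if for every `ω`, `μ ∈ P ω`,
`P`-selector `ν` and stopping time `τ`, `ν` is compatible with `μ` at `τ` and
`μ ∗_τ ν ∈ P ω`. -/
def TCSpace.Concatenable {Ω : Type*} [MeasurableSpace Ω] (X : TCSpace Ω)
    (P : Ω → Set (ProbabilityMeasure Ω)) : Prop :=
  ∀ (ω : Ω) (μ : ProbabilityMeasure Ω), μ ∈ P ω →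
    ∀ ν : Ω → ProbabilityMeasure Ω, IsSelector P ν →
      ∀ τ : Ω → ℝ≥0∞, X.toTSpace.IsStoppingTime τ →
        X.MeasCompatible (μ : Measure Ω) ν τ ∧
          ∃ μ' ∈ P ω, (μ' : Measure Ω) = X.concMeasure (μ : Measure Ω) ν τ

/-- A control correspondence on a TC-space is disintegrable if for every `ω`, `μ ∈ P ω` and
stopping time `τ` there is a `P`-selector `ν`, compatible with `μ` at `τ`, with
`μ = μ ∗_τ ν`. -/
def TCSpace.Disintegrable {Ω : Type*} [MeasurableSpace Ω] (X : TCSpace Ω)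
    (P : Ω → Set (ProbabilityMeasure Ω)) : Prop :=
  ∀ (ω : Ω) (μ : ProbabilityMeasure Ω), μ ∈ P ω →
    ∀ τ : Ω → ℝ≥0∞, X.toTSpace.IsStoppingTime τ →
      ∃ ν : Ω → ProbabilityMeasure Ω, IsSelector P ν ∧
        X.MeasCompatible (μ : Measure Ω) ν τ ∧
          (μ : Measure Ω) = X.concMeasure (μ : Measure Ω) ν τ

/-- A real path indexed by `[0,∞)` is càdlàg: right-continuous with left limits. -/
def IsCadlag (f : ℝ≥0 → ℝ) : Prop :=
  (∀ t : ℝ≥0, ContinuousWithinAt f (Set.Ici t) t) ∧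
  (∀ t : ℝ≥0, 0 < t → ∃ L : ℝ, Filter.Tendsto f (nhdsWithin t (Set.Iio t)) (nhds L))

/-- A càdlàg adapted real process for a filtration `F`. -/
def CadlagAdapted {Ω : Type*} [MeasurableSpace Ω] (F : ℝ≥0 → MeasurableSpace Ω)
    (Y : ℝ≥0 → Ω → ℝ) : Prop :=
  (∀ ω, IsCadlag fun t => Y t ω) ∧ (∀ t : ℝ≥0, Measurable[F t] (Y t))

/-- The space–time exit time `τₙ(ω) = inf{t ≥ 0 : |Yₜ(ω)| ≥ n} ∧ n`. -/
noncomputable def stopTau {Ω : Type*} (Y : ℝ≥0 → Ω → ℝ) (n : ℕ) (ω : Ω) : ℝ≥0 :=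
  sInf ({t : ℝ≥0 | (n : ℝ) ≤ |Y t ω|} ∪ {(n : ℝ≥0)})

/-- The stopped process `Yⁿ = Y^{τₙ}`. -/
noncomputable def stopped {Ω : Type*} (Y : ℝ≥0 → Ω → ℝ) (n : ℕ) : ℝ≥0 → Ω → ℝ :=
  fun t ω => Y (min (stopTau Y n ω) t) ω

/-- The martingale property (via set integrals) of a process for a filtration `F` and a
measure `μ`: integrability, together with `∫_A Y_t dμ = ∫_A Y_s dμ` for `s ≤ t` and
`A ∈ F s`. -/
def IsMartingaleOn {Ω : Type*} [MeasurableSpace Ω] (F : ℝ≥0 → MeasurableSpace Ω)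
    (μ : MeasureTheory.Measure Ω) (Y : ℝ≥0 → Ω → ℝ) : Prop :=
  (∀ t : ℝ≥0, MeasureTheory.Integrable (Y t) μ) ∧
  ∀ s t : ℝ≥0, s ≤ t → ∀ A : Set Ω, MeasurableSet[F s] A →
    ∫ ω in A, Y t ω ∂μ = ∫ ω in A, Y s ω ∂μ

/-- The adjusted concatenation on real paths:
`(x ⋆_t x')(s) = x(s)` for `s ≤ t` and `x(t) + x'(s−t) − x'(0)` for `s > t`. -/
noncomputable def adjConc (x : ℝ≥0 → ℝ) (t : ℝ≥0) (x' : ℝ≥0 → ℝ) : ℝ≥0 → ℝ :=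
  fun s => if s ≤ t then x s else x t + x' (s - t) - x' 0

/-- A TC-morphism from a TC-space into `(D_ℝ, ⋆)`: a map `Φ` into càdlàg real paths,
non-anticipating (each `Φ_t` is `𝓕ₜ`-measurable) and respecting concatenation:
`Φ(ω ∗_t ω') = Φ(ω) ⋆_t Φ(ω')` on the compatibility set. -/
def IsTCMorphismD {Ω : Type*} [mΩ : MeasurableSpace Ω] (X : TCSpace Ω)
    (Φ : Ω → ℝ≥0 → ℝ) : Prop :=
  (∀ ω, IsCadlag (Φ ω)) ∧
  (∀ t : ℝ≥0, Measurable[X.filt t] fun ω => Φ ω t) ∧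
  (∀ (t : ℝ≥0) (ω ω' : Ω), (ω, t, ω') ∈ X.Comp →
    Φ (X.conc ω t ω') = adjConc (Φ ω) t (Φ ω'))

/-- A TC-morphism into `(D_ℝ⁰, ⋆)`: a TC-morphism into `(D_ℝ, ⋆)` whose paths start at `0`. -/
def IsTCMorphismD0 {Ω : Type*} [mΩ : MeasurableSpace Ω] (X : TCSpace Ω)
    (Φ : Ω → ℝ≥0 → ℝ) : Prop :=
  IsTCMorphismD X Φ ∧ ∀ ω, Φ ω 0 = 0

/-- `Φ` is canonically locally bounded: there are constants `Mₙ` with `|Φⁿ_t(ω)| ≤ Mₙ`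
for all `ω`, `t`, where `Φⁿ` is `Φ` stopped at the space–time exit time `τₙ`. -/
def CanLocBounded {Ω : Type*} (Φ : Ω → ℝ≥0 → ℝ) : Prop :=
  ∃ M : ℕ → ℝ, ∀ (n : ℕ) (ω : Ω) (t : ℝ≥0),
    |stopped (fun t ω => Φ ω t) n t ω| ≤ M n

/-- A shift operator on a TC-space: a measurable partial inverse of concatenation with
`ω ∗_t θ_t(ω) = ω` and `(θ_t(ω))_{≤t+s} = (θ_t(ω_{≤s}))_{≤t+s}`. -/
def IsShift {Ω : Type*} [mΩ : MeasurableSpace Ω] (X : TCSpace Ω)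
    (θ : ℝ≥0 → Ω → Ω) : Prop :=
  Measurable (fun p : ℝ≥0 × Ω => θ p.1 p.2) ∧
  (∀ (t : ℝ≥0) (ω : Ω), (ω, t, θ t ω) ∈ X.Comp ∧ X.conc ω t (θ t ω) = ω) ∧
  (∀ (t s : ℝ≥0) (ω : Ω), X.T (t + s) (θ t ω) = X.T (t + s) (θ t (X.T s ω)))

/-- The shift at a stopping time, `θ_κ(ω) = θ_{κ(ω)}(ω)` with `θ_∞ = id`. -/
noncomputable def shiftStop {Ω : Type*}
    (θ : ℝ≥0 → Ω → Ω) (κ : Ω → ℝ≥0∞) (ω : Ω) : Ω :=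
  if κ ω = ∞ then ω else θ (κ ω).toNNReal ω

/-- The `(𝒟, X)`-generated control correspondence `𝒫̄(x)`: all Borel probability measures
under which every `Φⁿ`, `Φ ∈ 𝒟`, is a martingale and `X₀ = x` a.s. -/
def genCorr {Ω E : Type*} [mΩ : MeasurableSpace Ω] [MeasurableSpace E] (X : TCSpace Ω)
    {ι : Type*} (D : ι → Ω → ℝ≥0 → ℝ) (Xm : Ω → E) (x : E) :
    Set (MeasureTheory.ProbabilityMeasure Ω) :=
  {μ | (∀ i, ∀ n : ℕ, IsMartingaleOn X.filt (μ : MeasureTheory.Measure Ω)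
          (stopped (fun t ω => D i ω t) n)) ∧
       (μ : MeasureTheory.Measure Ω) {ω | Xm (X.T 0 ω) = x} = 1}

/-! Concatenation at a finite time `a` does not anticipate: `(ω ∗_a ω')_{≤a+t}` only depends on
`ω'_{≤t}`. By Galmarino's test (a stopping time is determined at `ω` by `ω_{≤t}` on `{τ ≤ t}`),
the event `{τ'_ω ≤ t} = {τ(ω ∗_a ω') ≤ a + t}` is therefore determined by `ω'_{≤t}`, and
`κ(ω ∗_κ ω') = κ(ω)`, which together with `κ ≤ τ` gives `τ(ω ∗_κ ω') = κ(ω) + τ'_ω(ω')`. -/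

lemma ENNReal.eq_of_forall_le_coe_iff {a b : ℝ≥0∞} (h : ∀ r : ℝ≥0, a ≤ r ↔ b ≤ r) : a = b :=
  eq_of_forall_ge_iff fun c => by
    induction c using ENNReal.recTopCoe with
    | top => simp
    | coe r => exact h r

namespace TSpace

variable {Ω : Type*} [MeasurableSpace Ω] (X : TSpace Ω)

lemma measurable_T (t : ℝ≥0) : Measurable (X.T t) :=
  X.meas_T.comp (measurable_const.prodMk measurable_id)

lemma filt_le (t : ℝ≥0) : X.filt t ≤ ‹MeasurableSpace Ω› := by
  rw [X.filt_eq]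
  exact (X.measurable_T t).comap_le

lemma T_eq_of_T_eq {s t : ℝ≥0} (hst : s ≤ t) {ω₁ ω₂ : Ω} (h : X.T t ω₁ = X.T t ω₂) :
    X.T s ω₁ = X.T s ω₂ := by
  rw [← min_eq_right hst, ← X.T_comp, h, X.T_comp]

lemma measurableSet_filt_iff {t : ℝ≥0} {s : Set Ω} :
    MeasurableSet[X.filt t] s ↔ ∃ B, MeasurableSet B ∧ X.T t ⁻¹' B = s := by
  rw [X.filt_eq]
  exact MeasurableSpace.measurableSet_comap

variable {X} {τ : Ω → ℝ≥0∞}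

lemma IsStoppingTime.measurable (hτ : X.IsStoppingTime τ) : Measurable τ := by
  refine measurable_of_Iic fun x => ?_
  induction x using ENNReal.recTopCoe with
  | top => simp
  | coe t => exact X.filt_le t _ (hτ t)

lemma IsStoppingTime.le_coe_iff_of_T_eq (hτ : X.IsStoppingTime τ) {t : ℝ≥0} {ω₁ ω₂ : Ω}
    (h : X.T t ω₁ = X.T t ω₂) : τ ω₁ ≤ t ↔ τ ω₂ ≤ t := by
  obtain ⟨B, -, hB⟩ := X.measurableSet_filt_iff.1 (hτ t)
  have hmem : ∀ ω, τ ω ≤ t ↔ X.T t ω ∈ B := fun ω => by rw [← Set.mem_preimage, hB]; rfl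
  rw [hmem, hmem, h]

lemma IsStoppingTime.eq_of_T_eq (hτ : X.IsStoppingTime τ) {t : ℝ≥0} {ω₁ ω₂ : Ω}
    (h : X.T t ω₁ = X.T t ω₂) (h₁ : τ ω₁ ≤ t) : τ ω₁ = τ ω₂ := by
  have h₂ : τ ω₂ ≤ t := (hτ.le_coe_iff_of_T_eq h).1 h₁
  refine ENNReal.eq_of_forall_le_coe_iff fun r => ?_
  rcases le_total r t with hrt | htr
  · exact hτ.le_coe_iff_of_T_eq (X.T_eq_of_T_eq hrt h)
  · have htr : (t : ℝ≥0∞) ≤ r := ENNReal.coe_le_coe.2 htr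
    exact ⟨fun _ => h₂.trans htr, fun _ => h₁.trans htr⟩

end TSpace

namespace TCSpace

variable {Ω : Type*} [MeasurableSpace Ω] (X : TCSpace Ω)

lemma measurable_conc_of_mem_comp {α : Type*} [MeasurableSpace α] {f : α → Ω × ℝ≥0 × Ω}
    (hf : Measurable f) {s : Set α} (hs : ∀ x ∈ s, f x ∈ X.Comp) :
    Measurable fun x : s => X.conc (f x).1 (f x).2.1 (f x).2.2 :=
  X.meas_conc.comp ((hf.comp measurable_subtype_coe).subtype_mk (h := fun x => hs x x.2))

lemma measurableSet_mem_comp_and_conc_mem {α : Type*} [MeasurableSpace α]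
    {f : α → Ω × ℝ≥0 × Ω} (hf : Measurable f) {B : Set Ω} (hB : MeasurableSet B) :
    MeasurableSet {x | f x ∈ X.Comp ∧ X.conc (f x).1 (f x).2.1 (f x).2.2 ∈ B} := by
  convert (hf X.meas_Comp).subtype_image
    ((X.measurable_conc_of_mem_comp hf (s := f ⁻¹' X.Comp) fun _ h => h) hB) using 1
  ext x
  simp [and_comm]

lemma T_add_conc_T {ω ω' : Ω} {a : ℝ≥0} (h : (ω, a, ω') ∈ X.Comp) (t : ℝ≥0) :
    X.T (a + t) (X.conc ω a (X.T t ω')) = X.T (a + t) (X.conc ω a ω') := by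
  have h' : (ω, a, X.T t ω') ∈ X.Comp := (X.comp_right ω a ω' t).1 h
  rcases eq_zero_or_pos t with rfl | ht
  · rw [add_zero, X.trunc_conc_le _ _ _ _ h' le_rfl, X.trunc_conc_le _ _ _ _ h le_rfl]
  · have hlt : a < a + t := lt_add_of_pos_right a ht
    rw [X.trunc_conc_gt _ _ _ _ h' hlt, X.trunc_conc_gt _ _ _ _ h hlt, add_tsub_cancel_left,
      X.T_comp, min_self]

variable {X} {τ : Ω → ℝ≥0∞}

lemma _root_.TSpace.IsStoppingTime.apply_conc (hτ : X.IsStoppingTime τ) {ω ω' : Ω} {a : ℝ≥0}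
    (h : (ω, a, ω') ∈ X.Comp) (hτω : τ ω = a) : τ (X.conc ω a ω') = τ ω :=
  (hτ.eq_of_T_eq (X.trunc_conc_le _ _ _ _ h le_rfl).symm hτω.le).symm

variable (X) (κ : Ω → ℝ≥0∞)

open Classical in
noncomputable def residualTime (τ : Ω → ℝ≥0∞) (ω ω' : Ω) : ℝ≥0∞ :=
  if κ ω < ⊤ ∧ (ω, (κ ω).toNNReal, ω') ∈ X.Comp then
    τ (X.conc ω (κ ω).toNNReal ω') - κ ω
  else ⊤

variable {X κ}

lemma residualTime_le_coe_iff {ω ω' : Ω} {a : ℝ≥0} (hκω : κ ω = a) (t : ℝ≥0) :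
    X.residualTime κ τ ω ω' ≤ t ↔ (ω, a, ω') ∈ X.Comp ∧ τ (X.conc ω a ω') ≤ ↑(a + t) := by
  have hκa : κ ω < ⊤ ∧ (κ ω).toNNReal = a := by simp [hκω]
  unfold residualTime
  by_cases hc : (ω, a, ω') ∈ X.Comp
  · rw [if_pos (by rwa [hκa.2, and_iff_right hκa.1]), hκa.2, hκω, tsub_le_iff_right, add_comm,
      ENNReal.coe_add]
    simp [hc]
  · rw [if_neg (by rwa [hκa.2, and_iff_right hκa.1])]
    simp [hc]

lemma residualTime_eq_top {ω : Ω} (hκω : κ ω = ⊤) (ω' : Ω) : X.residualTime κ τ ω ω' = ⊤ := by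
  simp [residualTime, hκω]

lemma measurable_residualTime (hκ : Measurable κ) (hτ : Measurable τ) :
    Measurable fun p : Ω × Ω => X.residualTime κ τ p.1 p.2 := by
  set A := {p : Ω × Ω | κ p.1 < ⊤ ∧ (p.1, (κ p.1).toNNReal, p.2) ∈ X.Comp}
  have hf : Measurable fun p : Ω × Ω => (p.1, (κ p.1).toNNReal, p.2) :=
    measurable_fst.prodMk ((hκ.comp measurable_fst).ennreal_toNNReal.prodMk measurable_snd)
  have hA : MeasurableSet A :=
    (measurableSet_lt (hκ.comp measurable_fst) measurable_const).inter (hf X.meas_Comp)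
  refine measurable_of_restrict_of_restrict_compl hA ?_ ?_
  · have hconc := X.measurable_conc_of_mem_comp hf (s := A) fun _ h => h.2
    convert (hτ.comp hconc).sub ((hκ.comp measurable_fst).comp measurable_subtype_coe) using 1
    funext q
    exact if_pos q.2
  · convert measurable_const (a := (⊤ : ℝ≥0∞)) using 1
    funext q
    exact if_neg q.2

lemma isStoppingTime_residualTime (hτ : X.IsStoppingTime τ) (ω : Ω) :
    X.IsStoppingTime (X.residualTime κ τ ω) := by
  intro t
  rw [TSpace.measurableSet_filt_iff]
  by_cases hκω : κ ω = ⊤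
  · refine ⟨∅, .empty, ?_⟩
    ext ω'
    simp [residualTime_eq_top hκω]
  obtain ⟨a, hκω⟩ := WithTop.ne_top_iff_exists.1 hκω
  refine ⟨{η | (ω, a, η) ∈ X.Comp ∧ τ (X.conc ω a η) ≤ ↑(a + t)},
    X.measurableSet_mem_comp_and_conc_mem (f := fun η => (ω, a, η))
      (measurable_const.prodMk (measurable_const.prodMk measurable_id))
      (hτ.measurable measurableSet_Iic), ?_⟩
  ext ω'
  simp only [Set.mem_preimage, Set.mem_ofPred_eq, residualTime_le_coe_iff hκω.symm]
  rw [← X.comp_right ω a ω' t]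
  exact and_congr_right fun h => hτ.le_coe_iff_of_T_eq (X.T_add_conc_T h t)

lemma add_residualTime (hκ : X.IsStoppingTime κ) (hle : ∀ ω, κ ω ≤ τ ω) {ω ω' : Ω}
    (hκω : κ ω < ⊤) (h : (ω, (κ ω).toNNReal, ω') ∈ X.Comp) :
    κ ω + X.residualTime κ τ ω ω' = τ (X.conc ω (κ ω).toNNReal ω') := by
  have hκconc := hκ.apply_conc h (ENNReal.coe_toNNReal hκω.ne).symm
  rw [residualTime, if_pos ⟨hκω, h⟩, add_tsub_cancel_of_le (hκconc.ge.trans (hle _))]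

end TCSpace

open Classical in
theorem stmt14_general {Ω : Type*} [mΩ : MeasurableSpace Ω]
    (X : TCSpace Ω) (κ τ : Ω → ℝ≥0∞)
    (hκ : X.toTSpace.IsStoppingTime κ) (hτ : X.toTSpace.IsStoppingTime τ)
    (hle : ∀ ω, κ ω ≤ τ ω)
    (τ' : Ω → Ω → ℝ≥0∞)
    (hτ'def : ∀ ω ω', τ' ω ω' =
      if κ ω < ⊤ ∧ (ω, (κ ω).toNNReal, ω') ∈ X.Comp then
        τ (X.conc ω (κ ω).toNNReal ω') - κ ω
      else ⊤) :
    Measurable (fun p : Ω × Ω => τ' p.1 p.2) ∧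
    (∀ ω : Ω, X.toTSpace.IsStoppingTime (τ' ω)) ∧
    (∀ ω ω' : Ω, κ ω < ⊤ → (ω, (κ ω).toNNReal, ω') ∈ X.Comp →
      τ (X.conc ω (κ ω).toNNReal ω') = κ ω + τ' ω ω') := by
  obtain rfl : τ' = X.residualTime κ τ := funext₂ hτ'def
  exact ⟨TCSpace.measurable_residualTime hκ.measurable hτ.measurable,
    TCSpace.isStoppingTime_residualTime hτ,
    fun ω ω' hκω h => (TCSpace.add_residualTime hκ hle hκω h).symm⟩

open Classical in
/-- For stopping times `κ ≤ τ` on a TC-space, the map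
`τ'_ω(ω') = τ(ω ∗_κ ω') − κ(ω)` (set to `+∞` when `κ(ω) = ∞` or `ω' ∉ 𝒞_{ω,κ(ω)}`) is
jointly measurable, each `τ'_ω` is a stopping time, and
`τ(ω ∗_κ ω') = κ(ω) + τ'_ω(ω')` on its effective domain. -/
theorem stmt14 {Ω : Type*} [mΩ : MeasurableSpace Ω] [StandardBorelSpace Ω]
    (X : TCSpace Ω) (κ τ : Ω → ℝ≥0∞)
    (hκ : X.toTSpace.IsStoppingTime κ) (hτ : X.toTSpace.IsStoppingTime τ)
    (hle : ∀ ω, κ ω ≤ τ ω)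
    (τ' : Ω → Ω → ℝ≥0∞)
    (hτ'def : ∀ ω ω', τ' ω ω' =
      if κ ω < ⊤ ∧ (ω, (κ ω).toNNReal, ω') ∈ X.Comp then
        τ (X.conc ω (κ ω).toNNReal ω') - κ ω
      else ⊤) :
    Measurable (fun p : Ω × Ω => τ' p.1 p.2) ∧
    (∀ ω : Ω, X.toTSpace.IsStoppingTime (τ' ω)) ∧
    (∀ ω ω' : Ω, κ ω < ⊤ → (ω, (κ ω).toNNReal, ω') ∈ X.Comp →
      τ (X.conc ω (κ ω).toNNReal ω') = κ ω + τ' ω ω') :=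
  stmt14_general (mΩ := mΩ) X κ τ hκ hτ hle τ' hτ'def
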